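/- arXiv:2005.08391 — 4 statements merged into one kernel-verified Lean document; each statement's English description precedes it below -/
import Mathlib

section
/- For any number of elements n ≥ 1 and parameter c ≥ 1, every c-ordered covering instance on elements {1,...,n} admits a covering of all elements whose total weight is at most 2·c·H_n, where H_n is the n-th harmonic number. -/
noncomputable def Hsum (m : ℕ) : ℝ := ∑ k ∈ Finset.Ioc 0 m, (1 : ℝ) / k

lemma Hsum_succ (k : ℕ) : Hsum (k + 1) = Hsum k + 1 / (k + 1 : ℕ) := by
  unfold Hsum
  rw [Finset.sum_Ioc_succ_top (Nat.zero_le k)]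

lemma Hsum_diff {a b : ℕ} (h : a ≤ b) :
    Hsum b - Hsum a = ∑ k ∈ Finset.Ioc a b, (1 : ℝ) / k := by
  unfold Hsum
  rw [← Finset.sum_Ioc_consecutive _ (Nat.zero_le a) h]
  ring

lemma Hsum_diff_ge {a b : ℕ} (h : a ≤ b) (hb : 0 < b) :
    ((b : ℝ) - a) / b ≤ Hsum b - Hsum a := by
  rw [Hsum_diff h]
  have : ∑ k ∈ Finset.Ioc a b, (1 : ℝ) / b ≤ ∑ k ∈ Finset.Ioc a b, (1 : ℝ) / k := by
    apply Finset.sum_le_sum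
    intro k hk
    rw [Finset.mem_Ioc] at hk
    apply one_div_le_one_div_of_le
    · exact_mod_cast Nat.lt_of_le_of_lt (Nat.zero_le a) hk.1
    · exact_mod_cast hk.2
  calc ((b : ℝ) - a) / b = (Finset.Ioc a b).card * ((1:ℝ)/b) := by
        rw [Nat.card_Ioc]
        push_cast [h]
        ring
    _ ≤ _ := by simpa using this

lemma Hsum_pred {u : ℕ} (h : 1 ≤ u) : Hsum u = Hsum (u - 1) + 1 / (u : ℝ) := by
  obtain ⟨k, rfl⟩ : ∃ k, u = k + 1 := ⟨u - 1, by omega⟩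
  rw [Hsum_succ]
  simp

lemma key (n : ℕ) (c : ℝ) (hc : 1 ≤ c) (A B : ℕ → Finset ℕ)
    (hpart : ∀ i ∈ Finset.Icc 1 n, A i ∪ B i = Finset.Icc 1 (i - 1)) :
    ∀ m : ℕ, ∀ S : Finset ℕ, S.card ≤ m → S ⊆ Finset.Icc 1 n →
      ∃ P Q : Finset ℕ, P ⊆ S ∧ Q ⊆ S ∧
        S ⊆ P.biUnion (fun i => {i}) ∪ Q.biUnion (fun i => {i} ∪ A i) ∧
        (∑ i ∈ P, c / ((B i).card + 1)) + (Q.card : ℝ) * c ≤ 2 * c * Hsum S.card := by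
  have hc0 : (0:ℝ) < c := lt_of_lt_of_le one_pos hc
  intro m
  induction m with
  | zero =>
    intro S hScard _
    refine ⟨∅, ∅, Finset.empty_subset _, Finset.empty_subset _, ?_, ?_⟩
    · have : S = ∅ := Finset.card_eq_zero.mp (Nat.le_zero.mp hScard)
      simp [this]
    · have : S = ∅ := Finset.card_eq_zero.mp (Nat.le_zero.mp hScard)
      simp [this, Hsum]
  | succ m ih =>
    intro S hScard hSsub
    rcases Finset.eq_empty_or_nonempty S with rfl | hS
    · exact ⟨∅, ∅, Finset.empty_subset _, Finset.empty_subset _, by simp, by simp [Hsum]⟩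
    set i := S.max' hS with hi
    have hiS : i ∈ S := S.max'_mem hS
    have hiI : i ∈ Finset.Icc 1 n := hSsub hiS
    have hi1 : 1 ≤ i := (Finset.mem_Icc.mp hiI).1
    set u := S.card with hu
    have hu1 : 1 ≤ u := Finset.card_pos.mpr hS
    set b := (B i).card with hb
    by_cases hcase : u ≤ 2 * (b + 1)
    · -- singleton pick at i
      obtain ⟨P, Q, hPs, hQs, hcov, hcost⟩ := ih (S.erase i)
        (by have := Finset.card_erase_of_mem hiS; omega)
        ((Finset.erase_subset _ _).trans hSsub)
      refine ⟨insert i P, Q, ?_, hQs.trans (Finset.erase_subset _ _), ?_, ?_⟩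
      · exact Finset.insert_subset hiS (hPs.trans (Finset.erase_subset _ _))
      · intro j hj
        rcases eq_or_ne j i with rfl | hne
        · simp
        · have := hcov (Finset.mem_erase.mpr ⟨hne, hj⟩)
          rw [Finset.mem_union] at this ⊢
          rcases this with h | h
          · left
            simp only [Finset.mem_biUnion] at h ⊢
            obtain ⟨x, hx, hx2⟩ := h
            exact ⟨x, Finset.mem_insert_of_mem hx, hx2⟩
          · right; exact h
      · have hiP : i ∉ P := fun h => (Finset.mem_erase.mp (hPs h)).1 rfl
        rw [Finset.sum_insert hiP]
        have hcard : (S.erase i).card = u - 1 := by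
          rw [Finset.card_erase_of_mem hiS]
        rw [hcard] at hcost
        have hH : Hsum u = Hsum (u - 1) + 1 / (u : ℝ) := Hsum_pred hu1
        have hterm : c / ((b : ℝ) + 1) ≤ 2 * c * (1 / (u : ℝ)) := by
          have h1 : (0:ℝ) < (u : ℝ) := by exact_mod_cast hu1
          rw [mul_one_div, div_le_div_iff₀ (by positivity) h1]
          have h2 : (u : ℝ) ≤ 2 * ((b:ℝ) + 1) := by exact_mod_cast hcase
          nlinarith [hc0.le]
        rw [hH]
        have hbb : ((B i).card : ℝ) = (b : ℝ) := by rw [hb]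
        rw [hbb]
        linarith
    · -- A-set pick at i
      have hBsub : B i ⊆ Finset.Icc 1 (i - 1) := by
        rw [← hpart i hiI]; exact Finset.subset_union_right
      set S' := S ∩ B i with hS'
      have hS'card : S'.card ≤ b := by
        apply Finset.card_le_card
        exact Finset.inter_subset_right
      obtain ⟨P, Q, hPs, hQs, hcov, hcost⟩ := ih S'
        (by
          have : S'.card ≤ S.card := Finset.card_le_card Finset.inter_subset_left
          omega)
        ((Finset.inter_subset_left).trans hSsub)
      have hPS : P ⊆ S := hPs.trans Finset.inter_subset_left
      have hQS : Q ⊆ S := hQs.trans Finset.inter_subset_left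
      have hiB : i ∉ B i := by
        intro h
        have := Finset.mem_Icc.mp (hBsub h)
        omega
      have hiQ : i ∉ Q := fun h => hiB (Finset.mem_inter.mp (hQs h)).2
      refine ⟨P, insert i Q, hPS, Finset.insert_subset hiS hQS, ?_, ?_⟩
      · intro j hj
        rcases eq_or_ne j i with rfl | hne
        · rw [Finset.mem_union]
          right
          rw [Finset.mem_biUnion]
          exact ⟨i, Finset.mem_insert_self _ _, by simp⟩
        by_cases hjB : j ∈ B i
        · have := hcov (Finset.mem_inter.mpr ⟨hj, hjB⟩)
          rw [Finset.mem_union] at this ⊢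
          rcases this with h | h
          · left; exact h
          · right
            simp only [Finset.mem_biUnion] at h ⊢
            obtain ⟨x, hx, hx2⟩ := h
            exact ⟨x, Finset.mem_insert_of_mem hx, hx2⟩
        · -- j ∈ A i
          have hjI : j ∈ Finset.Icc 1 n := hSsub hj
          have hj1 : 1 ≤ j := (Finset.mem_Icc.mp hjI).1
          have hji : j ≤ i := S.le_max' j hj
          have hjA : j ∈ A i := by
            have : j ∈ A i ∪ B i := by
              rw [hpart i hiI, Finset.mem_Icc]
              omega
            rw [Finset.mem_union] at this
            tauto
          rw [Finset.mem_union]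
          right
          rw [Finset.mem_biUnion]
          exact ⟨i, Finset.mem_insert_self _ _, by simp [hjA]⟩
      · rw [Finset.card_insert_of_notMem hiQ]
        set u' := S'.card with hu'
        have hdiff : ((u : ℝ) - u') / u ≤ Hsum u - Hsum u' := by
          apply Hsum_diff_ge ?_ (by omega)
          have : S'.card ≤ S.card := Finset.card_le_card Finset.inter_subset_left
          omega
        have hhalf : (1:ℝ) / 2 ≤ ((u : ℝ) - u') / u := by
          rw [div_le_div_iff₀ (by norm_num) (by positivity)]
          have h1 : (u' : ℝ) ≤ b := by exact_mod_cast hS'card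
          have h2 : 2 * ((b:ℝ) + 1) < u := by exact_mod_cast Nat.lt_of_not_le hcase
          linarith
        have : c ≤ 2 * c * (Hsum u - Hsum u') := by
          nlinarith [hc0.le]
        push_cast
        linarith

/-- Every `c`-ordered covering instance on elements `{1,…,n}` admits a covering of all
elements with total weight at most `2·c·H_n`. -/
theorem stmt_2 (n : ℕ) (hn : 1 ≤ n) (c : ℝ) (hc : 1 ≤ c)
    (A B : ℕ → Finset ℕ)
    (hpart : ∀ i ∈ Finset.Icc 1 n, A i ∪ B i = Finset.Icc 1 (i - 1))
    (hdisj : ∀ i ∈ Finset.Icc 1 n, A i ∩ B i = ∅)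
    (hmono : ∀ i ∈ Finset.Icc 1 n, ∀ j ∈ Finset.Icc 1 n, i < j → B i ⊆ B j) :
    ∃ P Q : Finset ℕ, P ⊆ Finset.Icc 1 n ∧ Q ⊆ Finset.Icc 1 n ∧
      (P.biUnion (fun i => {i}) ∪ Q.biUnion (fun i => {i} ∪ A i)) = Finset.Icc 1 n ∧
      (∑ i ∈ P, c / ((B i).card + 1)) + (∑ i ∈ Q, c)
        ≤ 2 * c * ∑ k ∈ Finset.Icc 1 n, (1 : ℝ) / k := by
  obtain ⟨P, Q, hP, hQ, hcov, hcost⟩ :=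
    key n c hc A B hpart n (Finset.Icc 1 n) (by simp) (le_refl _)
  refine ⟨P, Q, hP, hQ, ?_, ?_⟩
  · apply Finset.Subset.antisymm ?_ hcov
    apply Finset.union_subset
    · intro x hx
      rw [Finset.mem_biUnion] at hx
      obtain ⟨j, hj, hx⟩ := hx
      rw [Finset.mem_singleton] at hx
      exact hx ▸ hP hj
    · intro x hx
      rw [Finset.mem_biUnion] at hx
      obtain ⟨j, hj, hx⟩ := hx
      have hjI := hQ hj
      rw [Finset.mem_union] at hx
      rcases hx with hx | hx
      · rw [Finset.mem_singleton] at hx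
        exact hx ▸ hjI
      · have : x ∈ A j ∪ B j := Finset.mem_union_left _ hx
        rw [hpart j hjI, Finset.mem_Icc] at this
        have := Finset.mem_Icc.mp hjI
        rw [Finset.mem_Icc]
        omega
  · have h1 : ∑ i ∈ Q, c = (Q.card : ℝ) * c := by
      rw [Finset.sum_const, nsmul_eq_mul]
    have h2 : (Finset.Icc 1 n).card = n := by simp
    have h3 : Hsum n = ∑ k ∈ Finset.Icc 1 n, (1:ℝ)/k := by
      unfold Hsum
      congr 1
    rw [h1]
    rw [h2] at hcost
    rw [← h3]
    exact hcost
end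

section
/- Removing the last element n and any x elements coped by n (elements of A_n) from a c-ordered covering instance of length n, and renaming the remaining elements order-preservingly, yields a valid c-ordered covering instance of length n - x - 1. In particular, for any remaining elements i < j the monotonicity B_i ⊆ B_j is preserved and the partition property A_i ∪ B_i = {1,...,i-1} holds after renaming. -/
/-- Removing the last element `n` and a set `X` of elements coped by `n` (i.e. `X ⊆ A n`)
from a `c`-ordered covering instance of length `n`, and renaming the remaining elements
order-preservingly, yields a valid `c`-ordered covering instance of length `n - |X| - 1`. -/
theorem stmt_5 (n : ℕ) (hn : 1 ≤ n)
    (A B : ℕ → Finset ℕ)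
    (hpart : ∀ i ∈ Finset.Icc 1 n, A i ∪ B i = Finset.Icc 1 (i - 1))
    (hdisj : ∀ i ∈ Finset.Icc 1 n, A i ∩ B i = ∅)
    (hmono : ∀ i ∈ Finset.Icc 1 n, ∀ j ∈ Finset.Icc 1 n, i < j → B i ⊆ B j)
    (X : Finset ℕ) (hX : X ⊆ A n) :
    ∃ (ρ : ℕ → ℕ) (A' B' : ℕ → Finset ℕ),
      -- ρ is an order-preserving renaming of the remaining elements onto {1,…,n-|X|-1}
      Set.InjOn ρ ↑(Finset.Icc 1 n \ insert n X) ∧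
      StrictMonoOn ρ ↑(Finset.Icc 1 n \ insert n X) ∧
      (Finset.Icc 1 n \ insert n X).image ρ = Finset.Icc 1 (n - X.card - 1) ∧
      -- the new instance is obtained from the old one via ρ
      (∀ i ∈ Finset.Icc 1 n \ insert n X,
        A' (ρ i) = (A i \ insert n X).image ρ ∧ B' (ρ i) = (B i).image ρ) ∧
      -- the new instance is a valid c-ordered covering instance of length n - |X| - 1
      (∀ i ∈ Finset.Icc 1 (n - X.card - 1), A' i ∪ B' i = Finset.Icc 1 (i - 1)) ∧
      (∀ i ∈ Finset.Icc 1 (n - X.card - 1), A' i ∩ B' i = ∅) ∧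
      (∀ i ∈ Finset.Icc 1 (n - X.card - 1), ∀ j ∈ Finset.Icc 1 (n - X.card - 1),
        i < j → B' i ⊆ B' j) := by
  classical
  have hnI : n ∈ Finset.Icc 1 n := by simp [hn]
  have hAsub : ∀ i ∈ Finset.Icc 1 n, A i ⊆ Finset.Icc 1 (i - 1) := by
    intro i hi; rw [← hpart i hi]; exact Finset.subset_union_left
  have hBsub : ∀ i ∈ Finset.Icc 1 n, B i ⊆ Finset.Icc 1 (i - 1) := by
    intro i hi; rw [← hpart i hi]; exact Finset.subset_union_right
  have hXIcc : ∀ x ∈ X, 1 ≤ x ∧ x ≤ n - 1 := by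
    intro x hx
    have := hAsub n hnI (hX hx)
    simp only [Finset.mem_Icc] at this; exact this
  have hnX : n ∉ X := by
    intro h; have := hXIcc n h; omega
  set S : Finset ℕ := Finset.Icc 1 n \ insert n X with hSdef
  have hSsub : insert n X ⊆ Finset.Icc 1 n := by
    intro x hx
    rcases Finset.mem_insert.mp hx with rfl | hx
    · exact hnI
    · have := hXIcc x hx; simp only [Finset.mem_Icc]; omega
  have hm : S.card = n - X.card - 1 := by
    rw [hSdef, Finset.card_sdiff_of_subset hSsub, Finset.card_insert_of_notMem hnX,
      Nat.card_Icc]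
    have : X.card ≤ (Finset.Icc 1 (n-1)).card := Finset.card_le_card (by
      intro x hx; have := hXIcc x hx; simp only [Finset.mem_Icc]; omega)
    rw [Nat.card_Icc] at this
    omega
  set m := S.card with hmdef
  set e := S.orderIsoOfFin (rfl : S.card = m) with hedef
  have he_mem : ∀ j : Fin m, (e j : ℕ) ∈ S := fun j => (e j).2
  set ρ : ℕ → ℕ := fun x => if h : x ∈ S then ((e.symm ⟨x, h⟩ : Fin m) : ℕ) + 1 else 0
    with hρdef
  have hρ_spec : ∀ x (h : x ∈ S), ρ x = ((e.symm ⟨x, h⟩ : Fin m) : ℕ) + 1 := by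
    intro x h; simp only [hρdef, dif_pos h]
  have hρe : ∀ j : Fin m, ρ (e j) = (j : ℕ) + 1 := by
    intro j
    rw [hρ_spec _ (he_mem j)]
    congr 2
    have h1 : (⟨(e j : ℕ), he_mem j⟩ : {x // x ∈ S}) = e j := rfl
    rw [h1, e.symm_apply_apply]
  have hρmono : ∀ a, a ∈ S → ∀ b, b ∈ S → a < b → ρ a < ρ b := by
    intro a ha b hb hab
    rw [hρ_spec a ha, hρ_spec b hb]
    have h1 : (⟨a, ha⟩ : {x // x ∈ S}) < ⟨b, hb⟩ := Subtype.mk_lt_mk.mpr hab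
    have h2 : e.symm ⟨a, ha⟩ < e.symm ⟨b, hb⟩ := e.symm.lt_iff_lt.mpr h1
    have h3 := Fin.lt_iff_val_lt_val.mp h2
    omega
  have hρsm : StrictMonoOn ρ ↑S := by
    intro a ha b hb hab
    exact hρmono a (Finset.mem_coe.mp ha) b (Finset.mem_coe.mp hb) hab
  have hρinj : Set.InjOn ρ ↑S := hρsm.injOn
  -- the elementary facts about S
  have hS_mem : ∀ x, x ∈ S ↔ (1 ≤ x ∧ x ≤ n ∧ x ≠ n ∧ x ∉ X) := by
    intro x
    rw [hSdef]
    simp only [Finset.mem_sdiff, Finset.mem_Icc, Finset.mem_insert]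
    tauto
  -- image of S
  have himg : S.image ρ = Finset.Icc 1 m := by
    ext k
    simp only [Finset.mem_image, Finset.mem_Icc]
    constructor
    · rintro ⟨x, hx, rfl⟩
      rw [hρ_spec x hx]
      have := (e.symm ⟨x, hx⟩).isLt
      omega
    · intro hk
      have hlt : k - 1 < m := by omega
      exact ⟨e ⟨k - 1, hlt⟩, he_mem _, by rw [hρe]; simp; omega⟩
  -- key image lemma: elements of S below e j map onto Icc 1 j
  have hkey : ∀ j : Fin m, (S.filter (· < (e j : ℕ))).image ρ = Finset.Icc 1 (j : ℕ) := by
    intro j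
    ext k
    simp only [Finset.mem_image, Finset.mem_filter, Finset.mem_Icc]
    constructor
    · rintro ⟨x, ⟨hxS, hxlt⟩, rfl⟩
      rw [hρ_spec x hxS]
      have h1 : (⟨x, hxS⟩ : {y // y ∈ S}) < e j := Subtype.coe_lt_coe.mp (by exact hxlt)
      have h2 : e.symm ⟨x, hxS⟩ < j := by
        have := e.symm.lt_iff_lt.mpr h1
        rwa [e.symm_apply_apply] at this
      have h3 := Fin.lt_iff_val_lt_val.mp h2
      omega
    · intro hk
      have hlt : k - 1 < m := by have := j.isLt; omega
      refine ⟨e ⟨k - 1, hlt⟩, ⟨he_mem _, ?_⟩, by rw [hρe]; simp; omega⟩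
      have h1 : (⟨k - 1, hlt⟩ : Fin m) < j := Fin.lt_iff_val_lt_val.mpr (by simp; omega)
      have h2 : e ⟨k - 1, hlt⟩ < e j := e.lt_iff_lt.mpr h1
      exact Subtype.coe_lt_coe.mpr h2
  -- B i is disjoint from insert n X, for i ∈ S
  have hBdisj : ∀ i ∈ S, ∀ x ∈ B i, x ∉ insert n X := by
    intro i hi x hx hmem
    have hiS := (hS_mem i).mp hi
    have hiI : i ∈ Finset.Icc 1 n := Finset.mem_Icc.mpr ⟨hiS.1, hiS.2.1⟩
    have hxb := hBsub i hiI hx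
    simp only [Finset.mem_Icc] at hxb
    rcases Finset.mem_insert.mp hmem with rfl | hmem
    · omega
    · have hin : i < n := lt_of_le_of_ne hiS.2.1 hiS.2.2.1
      have hxBn : x ∈ B n := hmono i hiI n hnI hin hx
      have hxAn : x ∈ A n := hX hmem
      have : x ∈ A n ∩ B n := Finset.mem_inter.mpr ⟨hxAn, hxBn⟩
      rw [hdisj n hnI] at this
      exact absurd this (Finset.notMem_empty x)
  have hBS : ∀ i ∈ S, B i ⊆ S := by
    intro i hi x hx
    have hiS := (hS_mem i).mp hi
    have hiI : i ∈ Finset.Icc 1 n := Finset.mem_Icc.mpr ⟨hiS.1, hiS.2.1⟩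
    have hxb := hBsub i hiI hx
    simp only [Finset.mem_Icc] at hxb
    have := hBdisj i hi x hx
    simp only [Finset.mem_insert, not_or] at this
    rw [hS_mem]
    refine ⟨hxb.1, by omega, this.1, this.2⟩
  have hAS : ∀ i ∈ S, A i \ insert n X ⊆ S := by
    intro i hi x hx
    have hiS := (hS_mem i).mp hi
    have hiI : i ∈ Finset.Icc 1 n := Finset.mem_Icc.mpr ⟨hiS.1, hiS.2.1⟩
    rw [Finset.mem_sdiff] at hx
    have hxb := hAsub i hiI hx.1
    simp only [Finset.mem_Icc] at hxb
    have := hx.2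
    simp only [Finset.mem_insert, not_or] at this
    rw [hS_mem]
    refine ⟨hxb.1, by omega, this.1, this.2⟩
  -- the union identity
  have hunion : ∀ i ∈ S, (A i \ insert n X) ∪ B i = S.filter (· < i) := by
    intro i hi
    have hiS := (hS_mem i).mp hi
    have hiI : i ∈ Finset.Icc 1 n := Finset.mem_Icc.mpr ⟨hiS.1, hiS.2.1⟩
    ext x
    simp only [Finset.mem_union, Finset.mem_sdiff, Finset.mem_filter]
    constructor
    · rintro (⟨hxA, hxN⟩ | hxB)
      · have h1 := hAsub i hiI hxA
        simp only [Finset.mem_Icc] at h1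
        have h2 : x ∈ S := hAS i hi (Finset.mem_sdiff.mpr ⟨hxA, hxN⟩)
        exact ⟨h2, by omega⟩
      · have h1 := hBsub i hiI hxB
        simp only [Finset.mem_Icc] at h1
        exact ⟨hBS i hi hxB, by omega⟩
    · rintro ⟨hxS, hxlt⟩
      have hxS' := (hS_mem x).mp hxS
      have hxIcc : x ∈ Finset.Icc 1 (i - 1) := Finset.mem_Icc.mpr ⟨hxS'.1, by omega⟩
      rw [← hpart i hiI] at hxIcc
      have hxN : x ∉ insert n X := by
        simp only [Finset.mem_insert, not_or]
        exact ⟨hxS'.2.2.1, hxS'.2.2.2⟩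
      rcases Finset.mem_union.mp hxIcc with h | h
      · exact Or.inl ⟨h, hxN⟩
      · exact Or.inr h
  -- define A' and B'
  set A' : ℕ → Finset ℕ :=
    fun k => if h : k - 1 < m then (A (e ⟨k - 1, h⟩) \ insert n X).image ρ else ∅
    with hA'def
  set B' : ℕ → Finset ℕ :=
    fun k => if h : k - 1 < m then (B (e ⟨k - 1, h⟩)).image ρ else ∅
    with hB'def
  have hidx : ∀ i (hi : i ∈ S), ∃ h : ρ i - 1 < m, (e ⟨ρ i - 1, h⟩ : ℕ) = i := by
    intro i hi
    have h1 : ρ i - 1 < m := by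
      rw [hρ_spec i hi]
      simp only [Nat.add_sub_cancel]; exact (e.symm ⟨i, hi⟩).isLt
    refine ⟨h1, ?_⟩
    have h2 : (⟨ρ i - 1, h1⟩ : Fin m) = e.symm ⟨i, hi⟩ := by
      ext
      have := hρ_spec i hi
      simp only
      omega
    rw [h2, e.apply_symm_apply]
  have hm' : n - X.card - 1 = m := hm.symm
  refine ⟨ρ, A', B', hρinj, hρsm, by rw [himg, hm], ?_, ?_, ?_, ?_⟩
  · -- A' (ρ i) and B' (ρ i)
    intro i hi
    obtain ⟨h1, h2⟩ := hidx i hi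
    constructor
    · rw [hA'def]; simp only; rw [dif_pos h1, h2]
    · rw [hB'def]; simp only; rw [dif_pos h1, h2]
  · -- partition
    intro k hk
    rw [hm'] at hk
    rw [Finset.mem_Icc] at hk
    have h1 : k - 1 < m := by omega
    set j : Fin m := ⟨k - 1, h1⟩ with hjdef
    have hi : (e j : ℕ) ∈ S := he_mem j
    rw [hA'def, hB'def]
    simp only
    rw [dif_pos h1, dif_pos h1, ← Finset.image_union, hunion _ hi, hkey j]
  · -- disjointness
    intro k hk
    rw [hm'] at hk
    rw [Finset.mem_Icc] at hk
    have h1 : k - 1 < m := by omega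
    set j : Fin m := ⟨k - 1, h1⟩ with hjdef
    have hi : (e j : ℕ) ∈ S := he_mem j
    have hiS := (hS_mem _).mp hi
    have hiI : (e j : ℕ) ∈ Finset.Icc 1 n := Finset.mem_Icc.mpr ⟨hiS.1, hiS.2.1⟩
    rw [hA'def, hB'def]
    simp only
    rw [dif_pos h1, dif_pos h1]
    rw [Finset.eq_empty_iff_forall_notMem]
    intro z hz
    rw [Finset.mem_inter, Finset.mem_image, Finset.mem_image] at hz
    obtain ⟨⟨a, ha, hza⟩, ⟨b, hb, hzb⟩⟩ := hz
    have haS : a ∈ S := hAS _ hi ha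
    have hbS : b ∈ S := hBS _ hi hb
    have hab : a = b := hρinj (Finset.mem_coe.mpr haS) (Finset.mem_coe.mpr hbS)
      (by rw [hza, hzb])
    have : a ∈ A (e j) ∩ B (e j) :=
      Finset.mem_inter.mpr ⟨(Finset.mem_sdiff.mp ha).1, hab ▸ hb⟩
    rw [hdisj _ hiI] at this
    exact absurd this (Finset.notMem_empty a)
  · -- monotonicity
    intro k hk l hl hkl
    rw [hm'] at hk hl
    rw [Finset.mem_Icc] at hk hl
    have h1 : k - 1 < m := by omega
    have h2 : l - 1 < m := by omega
    rw [hB'def]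
    simp only
    rw [dif_pos h1, dif_pos h2]
    apply Finset.image_subset_image
    have hjk : (⟨k - 1, h1⟩ : Fin m) < ⟨l - 1, h2⟩ := Fin.lt_iff_val_lt_val.mpr (by simp; omega)
    have hlt : (e ⟨k - 1, h1⟩ : ℕ) < (e ⟨l - 1, h2⟩ : ℕ) :=
      Subtype.coe_lt_coe.mpr (e.lt_iff_lt.mpr hjk)
    have hk' := (hS_mem _).mp (he_mem ⟨k - 1, h1⟩)
    have hl' := (hS_mem _).mp (he_mem ⟨l - 1, h2⟩)
    exact hmono _ (Finset.mem_Icc.mpr ⟨hk'.1, hk'.2.1⟩) _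
      (Finset.mem_Icc.mpr ⟨hl'.1, hl'.2.1⟩) hlt
end

section
/- With facility cost g(k) = ⌈k/√|S|⌉, an algorithm that opens X facilities covering a total of T commodities incurs cost at least max(X, T/√|S|), and if X < √|S|/2 while E[T] ≥ |S|/16, then the expected cost is at least √|S|/16. Since the optimum cost is g(√|S|) = 1, the expected competitive ratio is at least √|S|/16. -/
/-- With facility cost `g(k) = ⌈k/√|S|⌉` (here `s = √|S|`, `|S| = s²`), an algorithm
opening `X` facilities of sizes `k i ≥ 1` pays at least `max(X, (∑ k i)/s)`; if
`X < s/2` while `E[T] ≥ s²/16` then the expected cost `max(X, E[T]/s)` is at least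
`s/16`; and the optimum pays `g(s) = ⌈s/s⌉ = 1`. -/
theorem stmt_10 (s : ℕ) (hs : 1 ≤ s) (X : ℕ) (k : Fin X → ℕ) (hk : ∀ i, 1 ≤ k i)
    (ET : ℝ) (hET : (s : ℝ) ^ 2 / 16 ≤ ET) (hX : (X : ℝ) < (s : ℝ) / 2) :
    max (X : ℝ) ((∑ i, (k i : ℝ)) / s) ≤ ∑ i, (⌈(k i : ℝ) / s⌉₊ : ℝ) ∧
    (s : ℝ) / 16 ≤ max (X : ℝ) (ET / s) ∧
    ⌈(s : ℝ) / s⌉₊ = 1 := by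
  have hs' : (0 : ℝ) < s := by exact_mod_cast hs
  refine ⟨?_, ?_, ?_⟩
  · apply max_le
    · calc (X : ℝ) = ∑ _i : Fin X, (1 : ℝ) := by simp
        _ ≤ ∑ i, (⌈(k i : ℝ) / s⌉₊ : ℝ) := by
          apply Finset.sum_le_sum
          intro i _
          have hki : (0 : ℝ) < (k i : ℝ) / s := by
            apply div_pos _ hs'
            exact_mod_cast hk i
          have : 1 ≤ ⌈(k i : ℝ) / s⌉₊ := Nat.one_le_iff_ne_zero.mpr (by
            simp [Nat.ceil_eq_zero, not_le, hki])
          exact_mod_cast this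
    · rw [Finset.sum_div]
      apply Finset.sum_le_sum
      intro i _
      exact le_trans (Nat.le_ceil _) (le_refl _)
  · apply le_max_of_le_right
    rw [le_div_iff₀ hs']
    calc (s : ℝ) / 16 * s = (s : ℝ) ^ 2 / 16 := by ring
      _ ≤ ET := hET
  · rw [div_self (ne_of_gt hs')]
    simp
end

section
/- Scaling step for small configurations: if for every commodity s in a configuration σ and every finite request set R' it holds that ∑_{r∈R'} (a_{rs} − 5·H_n·d(m,r))₊ ≤ 2·f_s·H_n, where f_s ≤ f_max := max over e∈σ of f^{{e}}_m, and if |σ| ≤ √|S| and f_max ≤ f^σ_m (costs are monotone), then summing the per-commodity bounds over σ gives ∑_{r∈R'} (∑_{s∈σ∩s_r} a_{rs}/(5√|S|·H_n) − d(m,r))₊ ≤ f^σ_m. -/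
/-- Scaling step for small configurations: if for every commodity `s` in a configuration
`σ` with `|σ| ≤ √|S|` the per-commodity bound
`∑_{r∈R'} (a_{rs} − 5·H_n·d(m,r))₊ ≤ 2·f^{{s}}_m·H_n` holds, and singleton costs are
bounded by the configuration cost `f^σ_m`, then
`∑_{r∈R'} (∑_{s∈σ∩s_r} a_{rs}/(5√|S|·H_n) − d(m,r))₊ ≤ f^σ_m`. -/
theorem stmt_16 {S ι : Type*} [Fintype S] [DecidableEq S]
    (hcard : 1 ≤ Fintype.card S)
    (n : ℕ) (hn : 1 ≤ n)
    (σ : Finset S) (hσ : (σ.card : ℝ) ≤ Real.sqrt (Fintype.card S))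
    (R' : Finset ι) (sr : ι → Finset S)
    (a : ι → S → ℝ) (ha : ∀ r s, 0 ≤ a r s)
    (d : ι → ℝ) (hd : ∀ r, 0 ≤ d r)
    (fsing : S → ℝ) (hfsing : ∀ e, 0 ≤ fsing e)
    (fσ : ℝ) (hfσ : 0 ≤ fσ) (hmonocost : ∀ e ∈ σ, fsing e ≤ fσ)
    (Hn : ℝ) (hHn : Hn = ∑ k ∈ Finset.Icc 1 n, (1 : ℝ) / k)
    (hyp : ∀ s ∈ σ, ∑ r ∈ R', max (a r s - 5 * Hn * d r) 0 ≤ 2 * fsing s * Hn) :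
    ∑ r ∈ R',
        max ((∑ s ∈ σ ∩ sr r, a r s) / (5 * Real.sqrt (Fintype.card S) * Hn) - d r) 0
      ≤ fσ := by
  have hHn1 : (1:ℝ) ≤ Hn := by
    rw [hHn]
    have h1 : (1:ℕ) ∈ Finset.Icc 1 n := by simp [hn]
    have := Finset.single_le_sum (f := fun k : ℕ => (1:ℝ)/k)
      (fun k _ => by positivity) h1
    simpa using this
  have hsq : (1:ℝ) ≤ Real.sqrt (Fintype.card S) := by
    rw [show (1:ℝ) = Real.sqrt 1 by simp]
    exact Real.sqrt_le_sqrt (by exact_mod_cast hcard)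
  set C := 5 * Real.sqrt (Fintype.card S) * Hn with hC
  have hCpos : 0 < C := by nlinarith
  have key : ∀ r ∈ R', max ((∑ s ∈ σ ∩ sr r, a r s) / C - d r) 0
      ≤ (∑ s ∈ σ, max (a r s - 5 * Hn * d r) 0) / C := by
    intro r _
    have hsum0 : 0 ≤ ∑ s ∈ σ, max (a r s - 5 * Hn * d r) 0 :=
      Finset.sum_nonneg (fun s _ => le_max_right _ _)
    apply max_le _ (by positivity)
    rw [sub_le_iff_le_add, div_le_iff₀ hCpos, add_mul, div_mul_cancel₀ _ (ne_of_gt hCpos)]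
    have h1 : ∑ s ∈ σ ∩ sr r, a r s ≤ ∑ s ∈ σ, a r s :=
      Finset.sum_le_sum_of_subset_of_nonneg (Finset.inter_subset_left)
        (fun s _ _ => ha r s)
    have h2 : ∑ s ∈ σ, a r s ≤
        (∑ s ∈ σ, max (a r s - 5 * Hn * d r) 0) + σ.card * (5 * Hn * d r) := by
      have := Finset.sum_le_sum (f := fun s => a r s)
        (g := fun s => max (a r s - 5 * Hn * d r) 0 + 5 * Hn * d r)
        (s := σ) (fun s _ => by
          have := le_max_left (a r s - 5 * Hn * d r) 0
          linarith)
      simpa [Finset.sum_add_distrib, mul_comm] using this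
    have h3 : (σ.card : ℝ) * (5 * Hn * d r) ≤ d r * C := by
      have hdr := hd r
      rw [hC]
      nlinarith [mul_le_mul_of_nonneg_right hσ
        (mul_nonneg (by linarith : (0:ℝ) ≤ 5 * Hn) hdr)]
    linarith
  calc ∑ r ∈ R', max ((∑ s ∈ σ ∩ sr r, a r s) / C - d r) 0
      ≤ ∑ r ∈ R', (∑ s ∈ σ, max (a r s - 5 * Hn * d r) 0) / C :=
        Finset.sum_le_sum key
    _ = (∑ s ∈ σ, ∑ r ∈ R', max (a r s - 5 * Hn * d r) 0) / C := by
        rw [← Finset.sum_div, Finset.sum_comm]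
    _ ≤ (∑ s ∈ σ, 2 * fσ * Hn) / C := by
        gcongr with s hs
        exact (hyp s hs).trans (by nlinarith [hmonocost s hs, hfsing s])
    _ = σ.card * (2 * fσ * Hn) / C := by rw [Finset.sum_const, nsmul_eq_mul]
    _ ≤ fσ := by
        rw [div_le_iff₀ hCpos, hC]
        have h := mul_le_mul_of_nonneg_right hσ (mul_nonneg hfσ (zero_le_one.trans hHn1))
        nlinarith
end
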